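/- In the independent-set reduction instance built from a finite simple graph G = (V, E) and an integer ℓ with 2ℓ ≤ |V|: if S ⊆ V is an independent set of G with |S| = ℓ, then the extension π that assigns the open items {a_v : v ∈ S} to agent p₁, assigns the open items {a_v : v ∈ V \ S} to agent p₂, and assigns nothing to any edge-agent, makes the extended allocation γ ∪ π envy-free. -/
import Mathlib


open Finset

variable {V : Type*} [Fintype V] [DecidableEq V]

/-- Agents of the independent-set reduction instance: one agent per edge of `G`,
plus two special agents `p₁ = Sum.inr 0` and `p₂ = Sum.inr 1`. -/
abbrev ISAgent (G : SimpleGraph V) [DecidableRel G.Adj] : Type _ :=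
  ↥G.edgeFinset ⊕ Fin 2

/-- Items of the reduction instance: one pre-allocated item `g_i = Sum.inl i`
per agent `i`, and one open item `a_v = Sum.inr v` per vertex `v`. -/
abbrev ISItem (G : SimpleGraph V) [DecidableRel G.Adj] : Type _ :=
  (ISAgent G) ⊕ V

/-- The valuations of the reduction instance. -/
noncomputable def ISVal (G : SimpleGraph V) [DecidableRel G.Adj] (ℓ : ℕ) :
    ISAgent G → ISItem G → ℝ := fun i x =>
  match i, x with
  | Sum.inl e, Sum.inl (Sum.inl e') =>
      if e' = e then (Fintype.card V : ℝ) else 0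
  | Sum.inl _, Sum.inl (Sum.inr q) =>
      if q = 0 then (Fintype.card V : ℝ) - 1 else 0
  | Sum.inl e, Sum.inr w => if w ∈ (e : Sym2 V) then 1 else 0
  | Sum.inr p, Sum.inl (Sum.inl _) =>
      if p = 0 then 0 else 2 * (Fintype.card V : ℝ) - ℓ
  | Sum.inr p, Sum.inl (Sum.inr q) =>
      if p = 0 then (if q = 0 then (Fintype.card V : ℝ) - 2 * ℓ else 0)
      else (if q = 1 then (Fintype.card V : ℝ) else 0)
  | Sum.inr _, Sum.inr _ => 1

/-- The partial allocation: each agent `i` holds its item `g_i`. -/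
def ISGamma (G : SimpleGraph V) [DecidableRel G.Adj] :
    ISAgent G → Finset (ISItem G) := fun i => {Sum.inl i}

/-- The extension determined by a vertex set `S`: `p₁` receives the open items of
the vertices in `S`, `p₂` receives the open items of the remaining vertices, and
the edge-agents receive nothing. -/
def ISPi (G : SimpleGraph V) [DecidableRel G.Adj] (S : Finset V) :
    ISAgent G → Finset (ISItem G) := fun i =>
  if i = Sum.inr 0 then S.image Sum.inr
  else if i = Sum.inr 1 then Sᶜ.image Sum.inr else ∅

lemma IS_bundle_edge (G : SimpleGraph V) [DecidableRel G.Adj] (S : Finset V)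
    (e : G.edgeFinset) (f : ISItem G → ℝ) :
    ∑ a ∈ ISGamma G (Sum.inl e) ∪ ISPi G S (Sum.inl e), f a
      = f (Sum.inl (Sum.inl e)) := by
  simp [ISGamma, ISPi]

lemma IS_bundle_p0 (G : SimpleGraph V) [DecidableRel G.Adj] (S : Finset V)
    (f : ISItem G → ℝ) :
    ∑ a ∈ ISGamma G (Sum.inr 0) ∪ ISPi G S (Sum.inr 0), f a
      = f (Sum.inl (Sum.inr 0)) + ∑ v ∈ S, f (Sum.inr v) := by
  rw [ISGamma, ISPi]
  rw [if_pos rfl, Finset.sum_union (by simp), Finset.sum_singleton,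
    Finset.sum_image (by simp)]

lemma IS_bundle_p1 (G : SimpleGraph V) [DecidableRel G.Adj] (S : Finset V)
    (f : ISItem G → ℝ) :
    ∑ a ∈ ISGamma G (Sum.inr 1) ∪ ISPi G S (Sum.inr 1), f a
      = f (Sum.inl (Sum.inr 1)) + ∑ v ∈ Sᶜ, f (Sum.inr v) := by
  rw [ISGamma, ISPi]
  rw [if_neg (by simp), if_pos rfl, Finset.sum_union (by simp), Finset.sum_singleton,
    Finset.sum_image (by simp)]


/-- If `S` is an independent set of `G` of size `ℓ` (with `2ℓ ≤ |V|`),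
then assigning the open items of `S` to `p₁`, the remaining open items to `p₂`, and
nothing to the edge-agents yields an envy-free extended allocation `γ ∪ π`. -/
theorem independentSet_gives_envyFree_extension
    (G : SimpleGraph V) [DecidableRel G.Adj] (ℓ : ℕ)
    (hcard : 2 * ℓ ≤ Fintype.card V)
    (S : Finset V) (hind : ∀ u ∈ S, ∀ w ∈ S, ¬ G.Adj u w) (hS : S.card = ℓ) :
    ∀ i j : ISAgent G,
      ∑ a ∈ ISGamma G i ∪ ISPi G S i, ISVal G ℓ i a ≥
        ∑ a ∈ ISGamma G j ∪ ISPi G S j, ISVal G ℓ i a := by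
  classical
  have hlc : ℓ ≤ Fintype.card V := by omega
  have hln2 : 2 * (ℓ : ℝ) ≤ (Fintype.card V : ℝ) := by exact_mod_cast hcard
  have hln : (ℓ : ℝ) ≤ (Fintype.card V : ℝ) := by exact_mod_cast hlc
  have hScc : ((Sᶜ.card : ℕ) : ℝ) = (Fintype.card V : ℝ) - ℓ := by
    rw [Finset.card_compl, hS, Nat.cast_sub hlc]
  intro i j
  obtain e | p := i
  · -- i is an edge-agent
    obtain ⟨u, w, he⟩ : ∃ u w, (e : Sym2 V) = s(u, w) :=
      Sym2.ind (fun u w => ⟨u, w, rfl⟩) (e : Sym2 V)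
    have hadj : G.Adj u w := by
      have h2 := e.2
      rw [SimpleGraph.mem_edgeFinset, he, SimpleGraph.mem_edgeSet] at h2
      exact h2
    have hn2 : (2 : ℝ) ≤ (Fintype.card V : ℝ) := by
      have : 1 < Fintype.card V := Fintype.one_lt_card_iff_nontrivial.mpr ⟨u, w, hadj.ne⟩
      exact_mod_cast this
    rw [IS_bundle_edge]
    have hown : ISVal G ℓ (Sum.inl e) (Sum.inl (Sum.inl e)) = (Fintype.card V : ℝ) := by
      simp [ISVal]
    rw [hown]
    have hmem : ∀ v, (v ∈ (e : Sym2 V)) ↔ (v = u ∨ v = w) := by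
      intro v; rw [he, Sym2.mem_iff]
    obtain e' | p := j
    · rw [IS_bundle_edge]
      simp only [ISVal]
      split <;> linarith
    · fin_cases p
      · simp only [Fin.mk_zero, Fin.mk_one]
        rw [IS_bundle_p0]
        have h1 : ISVal G ℓ (Sum.inl e) (Sum.inl (Sum.inr 0)) = (Fintype.card V : ℝ) - 1 := by
          simp [ISVal]
        have h2 : ∑ v ∈ S, ISVal G ℓ (Sum.inl e) (Sum.inr v) ≤ 1 := by
          have : ∑ v ∈ S, ISVal G ℓ (Sum.inl e) (Sum.inr v)
              = ((S.filter (fun v => v = u ∨ v = w)).card : ℝ) := by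
            rw [Finset.card_filter]
            push_cast
            refine Finset.sum_congr rfl fun v _ => ?_
            simp [ISVal, hmem v]
          rw [this]
          have hc : (S.filter (fun v => v = u ∨ v = w)).card ≤ 1 := by
            apply Finset.card_le_one.mpr
            intro a ha b hb
            simp only [Finset.mem_filter] at ha hb
            rcases ha.2 with rfl | rfl <;> rcases hb.2 with rfl | rfl
            · rfl
            · exact absurd hadj (hind a ha.1 b hb.1)
            · exact absurd hadj (hind b hb.1 a ha.1)
            · rfl
          exact_mod_cast hc
        rw [h1]
        linarith
      · simp only [Fin.mk_zero, Fin.mk_one]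
        rw [IS_bundle_p1]
        have h1 : ISVal G ℓ (Sum.inl e) (Sum.inl (Sum.inr 1)) = 0 := by
          simp [ISVal]
        have h2 : ∑ v ∈ Sᶜ, ISVal G ℓ (Sum.inl e) (Sum.inr v) ≤ 2 := by
          calc ∑ v ∈ Sᶜ, ISVal G ℓ (Sum.inl e) (Sum.inr v)
              ≤ ∑ v ∈ (Finset.univ : Finset V), ISVal G ℓ (Sum.inl e) (Sum.inr v) := by
                apply Finset.sum_le_sum_of_subset_of_nonneg (Finset.subset_univ _)
                intro v _ _
                simp only [ISVal]
                split <;> norm_num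
            _ = (((Finset.univ : Finset V).filter (fun v => v = u ∨ v = w)).card : ℝ) := by
                rw [Finset.card_filter]
                push_cast
                refine Finset.sum_congr rfl fun v _ => ?_
                simp [ISVal, hmem v]
            _ ≤ (({u, w} : Finset V).card : ℝ) := by
                have : ((Finset.univ : Finset V).filter (fun v => v = u ∨ v = w)) ⊆ {u, w} := by
                  intro v hv
                  simp only [Finset.mem_filter] at hv
                  simp [hv.2]
                exact_mod_cast Finset.card_le_card this
            _ ≤ 2 := by
                have := Finset.card_insert_le u ({w} : Finset V)
                simp only [Finset.card_singleton] at this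
                exact_mod_cast this
        rw [h1]
        linarith
  · fin_cases p
    · -- i = p₁
      simp only [Fin.mk_zero, Fin.mk_one]
      rw [IS_bundle_p0]
      have hown1 : ISVal G ℓ (Sum.inr 0) (Sum.inl (Sum.inr 0))
          = (Fintype.card V : ℝ) - 2 * ℓ := by simp [ISVal]
      have hown2 : ∑ v ∈ S, ISVal G ℓ (Sum.inr 0) (Sum.inr v) = (ℓ : ℝ) := by
        simp [ISVal, hS]
      rw [hown1, hown2]
      obtain e' | p := j
      · rw [IS_bundle_edge]
        have : ISVal G ℓ (Sum.inr 0) (Sum.inl (Sum.inl e')) = 0 := by simp [ISVal]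
        rw [this]; linarith
      · fin_cases p
        · simp only [Fin.mk_zero, Fin.mk_one]
          rw [IS_bundle_p0, hown1, hown2]
        · simp only [Fin.mk_zero, Fin.mk_one]
          rw [IS_bundle_p1]
          have h1 : ISVal G ℓ (Sum.inr 0) (Sum.inl (Sum.inr 1)) = 0 := by simp [ISVal]
          have h2 : ∑ v ∈ Sᶜ, ISVal G ℓ (Sum.inr 0) (Sum.inr v)
              = (Fintype.card V : ℝ) - ℓ := by
            simp only [ISVal]
            rw [Finset.sum_const, nsmul_eq_mul, mul_one, hScc]
          rw [h1, h2]; linarith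
    · -- i = p₂
      simp only [Fin.mk_zero, Fin.mk_one]
      rw [IS_bundle_p1]
      have hown1 : ISVal G ℓ (Sum.inr 1) (Sum.inl (Sum.inr 1))
          = (Fintype.card V : ℝ) := by simp [ISVal]
      have hown2 : ∑ v ∈ Sᶜ, ISVal G ℓ (Sum.inr 1) (Sum.inr v)
          = (Fintype.card V : ℝ) - ℓ := by
        simp only [ISVal]
        rw [Finset.sum_const, nsmul_eq_mul, mul_one, hScc]
      rw [hown1, hown2]
      obtain e' | p := j
      · rw [IS_bundle_edge]
        have : ISVal G ℓ (Sum.inr 1) (Sum.inl (Sum.inl e'))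
            = 2 * (Fintype.card V : ℝ) - ℓ := by simp [ISVal]
        rw [this]; linarith
      · fin_cases p
        · simp only [Fin.mk_zero, Fin.mk_one]
          rw [IS_bundle_p0]
          have h1 : ISVal G ℓ (Sum.inr 1) (Sum.inl (Sum.inr 0)) = 0 := by simp [ISVal]
          have h2 : ∑ v ∈ S, ISVal G ℓ (Sum.inr 1) (Sum.inr v) = (ℓ : ℝ) := by
            simp [ISVal, hS]
          rw [h1, h2]
          have hn0 : (0:ℝ) ≤ (Fintype.card V : ℝ) := Nat.cast_nonneg _
          linarith
        · simp only [Fin.mk_zero, Fin.mk_one]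
          rw [IS_bundle_p1, hown1, hown2]
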